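/- Let n ≥ 2, m ≤ n+1, and let f be a vertex of K_m^{M(M(K_n))} such that both f_{0,0} and f_{1,0} are injective on [n], Im f_{0,0} = Im f_{1,0}, and f(w_0) ∉ Im f_{0,0}. Then f has no neighbors in the induced subgraph G of K_m^{M(M(K_n))} on vertices g for which each g_{i,j} (i,j ∈ {0,1}) is constant or injective. -/

import Mathlib

/-- A finite graph in the sense of the paper: a symmetric adjacency relation,
loops are allowed. -/
structure SGraph (V : Type) where
  Adj : V → V → Prop
  symm : ∀ {u v}, Adj u v → Adj v u

namespace SGraph

variable {α β : Type}

/-- The complete graph `K_m` on vertex set `Fin m`. -/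
def completeG (m : ℕ) : SGraph (Fin m) :=
  ⟨fun i j => i ≠ j, fun h => h.symm⟩

/-- `f` is a graph homomorphism from `G` to `H`. -/
def IsHom (G : SGraph α) (H : SGraph β) (f : α → β) : Prop :=
  ∀ ⦃u v⦄, G.Adj u v → H.Adj (f u) (f v)

/-- `G` admits a proper coloring with `n` colors. -/
def Colorable (G : SGraph α) (n : ℕ) : Prop :=
  ∃ f : α → Fin n, G.IsHom (completeG n) f

/-- The chromatic number of `G`, as an extended natural number. -/
noncomputable def chromNum (G : SGraph α) : ℕ∞ :=
  sInf ((fun k : ℕ => (k : ℕ∞)) '' {k | G.Colorable k})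

/-- The neighborhood of a vertex. -/
def neighborSet (G : SGraph α) (v : α) : Set α := {w | G.Adj v w}

/-- The categorical product `G × H`. -/
def tensor (G : SGraph α) (H : SGraph β) : SGraph (α × β) :=
  ⟨fun p q => G.Adj p.1 q.1 ∧ H.Adj p.2 q.2, fun h => ⟨G.symm h.1, H.symm h.2⟩⟩

/-- The exponential graph `K_m^G`: vertices are all set maps `V(G) → [m]`,
and `f` is adjacent to `g` iff `f u ≠ g v` for every edge `(u,v)` of `G`
(loops are allowed). -/
def expG (G : SGraph α) (m : ℕ) : SGraph (α → Fin m) :=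
  ⟨fun f g => ∀ u v, G.Adj u v → f u ≠ g v,
   fun {f g} h u v huv e => h v u (G.symm huv) e.symm⟩

/-- `G` is connected: nonempty and any two vertices are joined by a walk. -/
def Connected (G : SGraph α) : Prop :=
  Nonempty α ∧ ∀ u v : α, Relation.ReflTransGen G.Adj u v

/-- Property `P` of the paper: `G` is simple, and for any two disjoint edges
`(v1,w1)` and `(v2,w2)`, if `(v2,v1)` is an edge then `(w2,v1)` or `(w2,w1)`
is an edge. -/
def PropertyP (G : SGraph α) : Prop :=
  (∀ v, ¬ G.Adj v v) ∧
  ∀ ⦃v1 w1 v2 w2 : α⦄, G.Adj v1 w1 → G.Adj v2 w2 →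
    v1 ≠ v2 → v1 ≠ w2 → w1 ≠ v2 → w1 ≠ w2 →
    G.Adj v2 v1 → (G.Adj w2 v1 ∨ G.Adj w2 w1)

/-- Base (unsymmetrized) relation for the Mycielskian:
level-0 copies are adjacent as in `G`, a level-1 vertex is adjacent to the
level-0 copies of the neighbours of its shadow, and the apex `none` is
adjacent to all level-1 vertices. -/
def mycRel (G : SGraph α) : Option (α × Bool) → Option (α × Bool) → Prop
  | some (a, false), some (b, false) => G.Adj a b
  | some (a, true), some (b, false) => G.Adj a b
  | none, some (_, true) => True
  | _, _ => False

/-- The Mycielskian `M(G)`. -/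
def myc (G : SGraph α) : SGraph (Option (α × Bool)) :=
  ⟨fun u v => G.mycRel u v ∨ G.mycRel v u, fun h => h.symm⟩

/-- The double Mycielskian `M(M(K_n))`. -/
def MMK (n : ℕ) : SGraph (Option (Option (Fin n × Bool) × Bool)) :=
  myc (myc (completeG n))

/-- The vertex `(x, i, j)` of `M(M(K_n))`. -/
def vtx {n : ℕ} (x : Fin n) (i j : Bool) : Option (Option (Fin n × Bool) × Bool) :=
  some (some (x, i), j)

/-- The vertex `w_i = (*, i)` of `M(M(K_n))` for `i ∈ {0,1}`. -/
def wv (n : ℕ) (i : Bool) : Option (Option (Fin n × Bool) × Bool) :=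
  some (none, i)

/-- The apex vertex `w_2` of `M(M(K_n))`. -/
def w2 (n : ℕ) : Option (Option (Fin n × Bool) × Bool) := none

end SGraph


/-!
With at most `n + 1` colours, `f(w₀)` is the only colour outside `Im f₀₀ = Im f₁₀`, so any
colour that avoids this image is `f(w₀)`. For a neighbour `g` of `f` this gives in turn
`g(w₁) = f(w₀)`, then `g(x,1,1) = f(x,0,0)` for every `x` (otherwise `g(x,1,1)` would avoid
`Im f₀₀` and clash with `f(w₀)`), and then `f(w₂) = f(w₀)`; so `f(w₂) = g(w₁)`, contradicting
the edge `w₂w₁`.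
-/

theorem subsingleton_compl_range_of_card_le_succ {α β : Type*} [Fintype α] [Fintype β]
    {u : α → β} (hu : Function.Injective u)
    (hcard : Fintype.card β ≤ Fintype.card α + 1) : (Set.range u)ᶜ.Subsingleton := by
  classical
  have hcompl : (Finset.univ.image u)ᶜ.card ≤ 1 := by
    rw [Finset.card_compl, Finset.card_image_of_injective _ hu, Finset.card_univ]
    omega
  intro a ha b hb
  exact Finset.card_le_one.mp hcompl a (by simpa using ha) b (by simpa using hb)

namespace SGraph

variable {n : ℕ}

theorem MMK_adj_vtx_true_false_wv_true (y : Fin n) :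
    (MMK n).Adj (vtx y true false) (wv n true) :=
  Or.inr (Or.inl trivial)

theorem MMK_adj_wv_false_vtx_true_true (x : Fin n) :
    (MMK n).Adj (wv n false) (vtx x true true) :=
  Or.inr (Or.inr trivial)

theorem MMK_adj_vtx_false_false_vtx_true_true {x y : Fin n} (hxy : y ≠ x) :
    (MMK n).Adj (vtx y false false) (vtx x true true) :=
  Or.inr (Or.inl hxy.symm)

theorem MMK_adj_w2_vtx_true_true (x : Fin n) : (MMK n).Adj (w2 n) (vtx x true true) :=
  Or.inl trivial

theorem MMK_adj_w2_wv_true : (MMK n).Adj (w2 n) (wv n true) :=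
  Or.inl trivial

end SGraph


namespace Graph

open SGraph

theorem no_neighbor_in_folded_subgraph (n m : ℕ)
    (hmn : m ≤ n + 1)
    (f : Option (Option (Fin n × Bool) × Bool) → Fin m)
    (h00 : Function.Injective fun x : Fin n => f (vtx x false false))
    (hIm : Set.range (fun x : Fin n => f (vtx x false false)) =
      Set.range (fun x : Fin n => f (vtx x true false)))
    (hw : f (wv n false) ∉ Set.range (fun x : Fin n => f (vtx x false false))) :
    ∀ g : Option (Option (Fin n × Bool) × Bool) → Fin m,
      (∀ i j : Bool, (∃ c, ∀ x : Fin n, g (vtx x i j) = c) ∨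
        Function.Injective fun x : Fin n => g (vtx x i j)) →
      ¬ (expG (MMK n) m).Adj f g := by
  intro g _ hfg
  have missed : ∀ a, a ∉ Set.range (fun x : Fin n => f (vtx x false false)) →
      a = f (wv n false) := fun a ha =>
    subsingleton_compl_range_of_card_le_succ h00 (by simpa using hmn) ha hw
  have g_w1 : g (wv n true) = f (wv n false) := by
    refine missed _ (hIm ▸ ?_)
    rintro ⟨y, hy⟩
    exact hfg _ _ (MMK_adj_vtx_true_false_wv_true y) hy
  have g_x11 : ∀ x, g (vtx x true true) = f (vtx x false false) := by
    intro x
    by_contra hne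
    refine hfg _ _ (MMK_adj_wv_false_vtx_true_true x) (missed _ ?_).symm
    rintro ⟨y, hy⟩
    by_cases hyx : y = x
    · exact hne (hyx ▸ hy.symm)
    · exact hfg _ _ (MMK_adj_vtx_false_false_vtx_true_true hyx) hy
  have f_w2 : f (w2 n) = f (wv n false) := by
    refine missed _ ?_
    rintro ⟨x, hx⟩
    exact hfg _ _ (MMK_adj_w2_vtx_true_true x) (hx.symm.trans (g_x11 x).symm)
  exact hfg _ _ MMK_adj_w2_wv_true (f_w2.trans g_w1.symm)

end Graph
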